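/- Let M, N be natural numbers with 1 ≤ N ≤ 2M ≤ 2N. Then 4MN/(2M+N) is the greatest element of the set {s ∈ ℝ : ∃ (x,y) ∈ C_DoF(M,N), s = x + y}. (This is the case N ≤ 2M ≤ 2N of the total DoF of the MIMO X-channel with asymmetric output feedback and delayed CSIT, Table I.) -/

import Mathlib

/-!
Both constraints of the region are tight at the optimum. With `a = 2M` and `b = N` (the two
minima under `N ≤ 2M ≤ 2N`), adding them gives `(x + y) (1/a + 1/b) ≤ 2`, so the sum is at most
the harmonic mean `2ab/(a + b)`, attained at the symmetric corner `x = y = ab/(a + b)`.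
-/

/-- Sum DoF region of the (M,M,N,N) MIMO X-channel with asymmetric output feedback
and delayed CSIT, without security constraints (Theorem 4). -/
noncomputable def CDoF (M N : ℕ) : Set (ℝ × ℝ) :=
  {p | 0 ≤ p.1 ∧ 0 ≤ p.2 ∧
    p.1 / min (2 * (M : ℝ)) (2 * (N : ℝ)) + p.2 / min (2 * (M : ℝ)) (N : ℝ) ≤ 1 ∧
    p.1 / min (2 * (M : ℝ)) (N : ℝ) + p.2 / min (2 * (M : ℝ)) (2 * (N : ℝ)) ≤ 1}

def swappedWeightsRegion (a b : ℝ) : Set (ℝ × ℝ) :=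
  {p | 0 ≤ p.1 ∧ 0 ≤ p.2 ∧ p.1 / a + p.2 / b ≤ 1 ∧ p.1 / b + p.2 / a ≤ 1}

lemma cDoF_eq_swappedWeightsRegion (M N : ℕ) :
    CDoF M N = swappedWeightsRegion (min (2 * (M : ℝ)) (2 * (N : ℝ))) (min (2 * (M : ℝ)) N) :=
  rfl

lemma sum_le_of_mem_swappedWeightsRegion {a b : ℝ} (ha : 0 < a) (hb : 0 < b) {p : ℝ × ℝ}
    (hp : p ∈ swappedWeightsRegion a b) : p.1 + p.2 ≤ 2 * a * b / (a + b) := by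
  obtain ⟨-, -, h₁, h₂⟩ := hp
  have hsum : (p.1 + p.2) * (1 / a + 1 / b) ≤ 2 := by
    calc (p.1 + p.2) * (1 / a + 1 / b) = (p.1 / a + p.2 / b) + (p.1 / b + p.2 / a) := by ring
      _ ≤ 2 := by linarith
  have hmean : 2 / (1 / a + 1 / b) = 2 * a * b / (a + b) := by
    field_simp
    ring
  rw [← hmean, le_div_iff₀ (by positivity)]
  exact hsum

lemma symmetric_corner_mem_swappedWeightsRegion {a b : ℝ} (ha : 0 < a) (hb : 0 < b) :
    (a * b / (a + b), a * b / (a + b)) ∈ swappedWeightsRegion a b := by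
  have hcorner : a * b / (a + b) / a + a * b / (a + b) / b = 1 := by
    field_simp
    ring
  refine ⟨by positivity, by positivity, hcorner.le, ?_⟩
  rw [add_comm]
  exact hcorner.le

theorem isGreatest_sum_swappedWeightsRegion {a b : ℝ} (ha : 0 < a) (hb : 0 < b) :
    IsGreatest {s : ℝ | ∃ p ∈ swappedWeightsRegion a b, s = p.1 + p.2}
      (2 * a * b / (a + b)) := by
  refine ⟨⟨_, symmetric_corner_mem_swappedWeightsRegion ha hb, by ring⟩, ?_⟩
  rintro s ⟨p, hp, rfl⟩
  exact sum_le_of_mem_swappedWeightsRegion ha hb hp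

/-- For 1 ≤ N ≤ 2M ≤ 2N, the maximal sum x + y over C_DoF(M,N)
equals 4MN/(2M+N). -/
theorem total_dof_case_mid (M N : ℕ) (hN : 1 ≤ N) (h1 : N ≤ 2 * M)
    (h2 : 2 * M ≤ 2 * N) :
    IsGreatest {s : ℝ | ∃ p ∈ CDoF M N, s = p.1 + p.2}
      (4 * (M : ℝ) * (N : ℝ) / (2 * (M : ℝ) + (N : ℝ))) := by
  have hN' : (0 : ℝ) < N := by exact_mod_cast hN
  have h1' : (N : ℝ) ≤ 2 * M := by exact_mod_cast h1
  have h2' : 2 * (M : ℝ) ≤ 2 * N := by exact_mod_cast h2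
  rw [cDoF_eq_swappedWeightsRegion, min_eq_left h2', min_eq_right h1']
  convert isGreatest_sum_swappedWeightsRegion (by linarith : (0 : ℝ) < 2 * M) hN' using 1
  ring
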